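/- arXiv:1101.2355 — 2 statements merged into one kernel-verified Lean document; each statement's English description precedes it below -/
import Mathlib

section
/- Let θ ∈ ℝ with θ ∉ ℕ* = {1,2,...}, and let F be holomorphic near 0 ∈ ℂ. Then there exists a holomorphic function h near 0 with h(0) ≠ 0 such that, setting u(z) = z h(z), one has e^{-F(z)} z^{-θ} dz = u^{-θ} du as 1-forms near 0; equivalently, e^{-F(z)} z^{-θ} = u(z)^{-θ} u'(z) for a suitable branch of the power on the image. -/
/-
With τ = 1 - θ and h = v^{1/τ}, the identity e^{-F} = h^{-θ} (z h)' becomes the Euler equation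
τ v + z v' = τ e^{-F}. It is solved termwise: the n-th Taylor coefficient of v is that of τ e^{-F}
divided by τ + n, which is nonzero because θ ∉ ℕ*, and these factors are bounded, so v has the
same radius of convergence. Since v(0) = e^{-F(0)} ≠ 0, we may write v = e^M near 0, and take
L = M / τ, h = e^L.
-/

open Filter FormalMultilinearSeries Topology
open scoped ENNReal

section EulerEquation

variable {𝕜 E F : Type*} [RCLike 𝕜] [NormedAddCommGroup E] [NormedSpace 𝕜 E]
  [NormedAddCommGroup F] [NormedSpace 𝕜 F]

theorem FormalMultilinearSeries.radius_le_radius_smul (p : FormalMultilinearSeries 𝕜 E F)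
    {c : ℕ → 𝕜} {K : ℝ} (hc : ∀ n, ‖c n‖ ≤ K) :
    p.radius ≤ FormalMultilinearSeries.radius fun n => c n • p n :=
  radius_le_smul (c := (K : 𝕜)).trans <| radius_le_of_le fun n => calc
    ‖c n • p n‖ ≤ K * ‖p n‖ := by
      rw [norm_smul]; exact mul_le_mul_of_nonneg_right (hc n) (norm_nonneg _)
    _ ≤ ‖((K : 𝕜) • p) n‖ := by
      rw [smul_apply, norm_smul, RCLike.norm_ofReal]; gcongr; exact le_abs_self K

theorem RCLike.exists_norm_inv_add_natCast_le (τ : 𝕜) : ∃ K : ℝ, ∀ n : ℕ, ‖(τ + n)⁻¹‖ ≤ K := by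
  have hnorm : Tendsto (fun n : ℕ => ‖τ + n‖) atTop atTop := by
    refine tendsto_atTop_mono (fun n => ?_)
      (tendsto_atTop_add_const_right _ (-‖τ‖) tendsto_natCast_atTop_atTop)
    have := norm_sub_norm_le (n : 𝕜) (-τ)
    rw [RCLike.norm_natCast, norm_neg, sub_neg_eq_add, add_comm] at this
    linarith
  obtain ⟨K, hK⟩ := (hnorm.inv_tendsto_atTop.congr fun n => (norm_inv _).symm).bddAbove_range
  exact ⟨K, fun n => hK ⟨n, rfl⟩⟩

variable [CompleteSpace E]

theorem HasFPowerSeriesOnBall.smul_add_smul_deriv_eq {v g : 𝕜 → E}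
    {p q : FormalMultilinearSeries 𝕜 𝕜 E} {r : ℝ≥0∞} {τ : 𝕜}
    (hv : HasFPowerSeriesOnBall v q 0 r) (hg : HasFPowerSeriesOnBall g p 0 r)
    (hpq : ∀ n, p n = (τ + n) • q n) {y : 𝕜} (hy : y ∈ Metric.eball 0 r) :
    τ • v y + y • deriv v y = g y := by
  have hv_sum : HasSum (fun n => q n fun _ => y) (v y) := by simpa using hv.hasSum hy
  have hfderiv : HasSum (fun n => (q.derivSeries n fun _ => y) y) (fderiv 𝕜 v y y) := by
    simpa using (ContinuousLinearMap.apply 𝕜 E y).hasSum (hv.fderiv.hasSum hy)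
  have hderiv : HasSum (fun n : ℕ => (n : 𝕜) • (q n fun _ => y)) (y • deriv v y) := by
    rw [← hasSum_nat_add_iff' 1]
    simp only [derivSeries_apply_diag, ← Nat.cast_smul_eq_nsmul 𝕜] at hfderiv
    simpa [fderiv_apply_one_eq_deriv] using hfderiv
  have hsum : HasSum (fun n => p n fun _ => y) (τ • v y + y • deriv v y) := by
    simpa only [hpq, _root_.smul_apply, _root_.add_apply, add_smul]
      using (hv_sum.const_smul τ).add hderiv
  exact hsum.unique (by simpa only [zero_add] using hg.hasSum hy)

theorem AnalyticAt.exists_smul_add_smul_deriv_eq {g : 𝕜 → E} (hg : AnalyticAt 𝕜 g 0) {τ : 𝕜}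
    (hτ : ∀ n : ℕ, τ + n ≠ 0) :
    ∃ v : 𝕜 → E, AnalyticAt 𝕜 v 0 ∧ ∀ᶠ z in 𝓝 0, τ • v z + z • deriv v z = g z := by
  obtain ⟨p, r, hp⟩ := hg
  obtain ⟨K, hK⟩ := RCLike.exists_norm_inv_add_natCast_le τ
  set q : FormalMultilinearSeries 𝕜 𝕜 E := fun n => (τ + n)⁻¹ • p n
  have hr : r ≤ q.radius := hp.r_le.trans (p.radius_le_radius_smul hK)
  have hv : HasFPowerSeriesOnBall q.sum q 0 r :=
    (q.hasFPowerSeriesOnBall (hp.r_pos.trans_le hr)).mono hp.r_pos hr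
  refine ⟨q.sum, hv.analyticAt, ?_⟩
  filter_upwards [Metric.eball_mem_nhds 0 hp.r_pos] with y hy
  exact hv.smul_add_smul_deriv_eq hp (fun n => by simp [q, smul_smul, mul_inv_cancel₀ (hτ n)]) hy

end EulerEquation

open Complex

theorem AnalyticAt.exists_cexp_eq {v : ℂ → ℂ} {x : ℂ} (hv : AnalyticAt ℂ v x) (hx : v x ≠ 0) :
    ∃ M : ℂ → ℂ, AnalyticAt ℂ M x ∧ (fun z => Complex.exp (M z)) =ᶠ[𝓝 x] v := by
  refine ⟨fun z => Complex.log (v x) + Complex.log (v z / v x), analyticAt_const.add ?_, ?_⟩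
  · exact (hv.div analyticAt_const hx).clog (by simp [hx, one_mem_slitPlane])
  · filter_upwards [hv.continuousAt.eventually_ne hx] with z hz
    rw [exp_add, exp_log hx, exp_log (div_ne_zero hz hx), mul_div_cancel₀ _ hx]

/- For h = e^{M/(1-θ)} and u = z h one has u^{1-θ} = z^{1-θ} e^M; differentiating,
u^{-θ} u' = z^{-θ} (e^M + z (e^M)' / (1-θ)). This is that identity divided by z^{-θ}. -/
theorem cexp_neg_mul_mul_add_mul_deriv_eq {θ : ℂ} (hθ : 1 - θ ≠ 0) {M : ℂ → ℂ} {z : ℂ}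
    (hM : DifferentiableAt ℂ M z) :
    exp (-θ * ((1 - θ)⁻¹ * M z)) *
        (exp ((1 - θ)⁻¹ * M z) + z * deriv (fun w => exp ((1 - θ)⁻¹ * M w)) z) =
      (1 - θ)⁻¹ * ((1 - θ) * exp (M z) + z * deriv (fun w => exp (M w)) z) := by
  rw [deriv_cexp (hM.const_mul _), deriv_cexp hM, deriv_const_mul _ hM]
  have hexp : exp (-θ * ((1 - θ)⁻¹ * M z)) * exp ((1 - θ)⁻¹ * M z) = exp (M z) := by
    rw [← exp_add]; congr 1; field_simp; ring
  linear_combination (1 + z * ((1 - θ)⁻¹ * deriv M z)) * hexp - exp (M z) * mul_inv_cancel₀ hθ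

theorem conical_coordinate_nonintegral (θ : ℝ) (hθ : ∀ n : ℕ, 1 ≤ n → θ ≠ (n : ℝ))
    (F : ℂ → ℂ) (hF : AnalyticAt ℂ F 0) :
    ∃ h L : ℂ → ℂ, AnalyticAt ℂ h 0 ∧ AnalyticAt ℂ L 0 ∧ h 0 ≠ 0 ∧
      (∀ᶠ z in nhds (0 : ℂ), Complex.exp (L z) = h z) ∧
      (∀ᶠ z in nhds (0 : ℂ),
        Complex.exp (-F z) = Complex.exp (-(θ : ℂ) * L z) * (h z + z * deriv h z)) := by
  have hτ : ∀ n : ℕ, 1 - (θ : ℂ) + n ≠ 0 := fun n h =>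
    hθ (n + 1) (by omega) (by norm_cast at h; push_cast; linarith)
  have hτ0 : 1 - (θ : ℂ) ≠ 0 := by simpa using hτ 0
  have hg : AnalyticAt ℂ (fun z => (1 - θ) * exp (-F z)) 0 := analyticAt_const.mul hF.neg.cexp
  obtain ⟨v, hv, hode⟩ := hg.exists_smul_add_smul_deriv_eq hτ
  simp only [smul_eq_mul] at hode
  have hv0 : v 0 ≠ 0 := by
    have hode0 := hode.self_of_nhds
    rw [zero_mul, add_zero, mul_right_inj' hτ0] at hode0
    exact hode0 ▸ exp_ne_zero _
  obtain ⟨M, hM, hexpM⟩ := hv.exists_cexp_eq hv0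
  refine ⟨fun z => exp ((1 - (θ : ℂ))⁻¹ * M z), fun z => (1 - (θ : ℂ))⁻¹ * M z,
    (analyticAt_const.mul hM).cexp, analyticAt_const.mul hM, exp_ne_zero _,
    .of_forall fun _ => rfl, ?_⟩
  filter_upwards [hode, hexpM.eventually_nhds, hM.eventually_analyticAt]
    with z hz (hexpMz : (fun w => exp (M w)) =ᶠ[𝓝 z] v) hMz
  rw [cexp_neg_mul_mul_add_mul_deriv_eq hτ0 hMz.differentiableAt, hexpMz.deriv_eq,
    hexpMz.eq_of_nhds, hz, inv_mul_cancel_left₀ hτ0]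
end

section
/- Let θ ∈ ℤ, θ ≥ 2, and F holomorphic near 0 ∈ ℂ. If the equation e^{-F(z)} z^{-θ} dz = (1 + c u^{θ-1}) u^{-θ} du admits a solution u(z) = z h(z)^{1/(1-θ)} with h holomorphic, h(0) ≠ 0, then necessarily c equals the residue of z^{-θ} e^{-F(z)} at z = 0, i.e., c = a_{θ-1} where e^{-F(z)} = Σ a_n z^n. -/
/-!
Integrate both sides of the equation over a small circle `|z| = r`. On the left, Cauchy's
formula for the Taylor coefficients of `e^{-F}` gives `2πi a_{θ-1}`. On the right, the integrand
is `u^{-θ} u' + c u'/u`: the first term is the derivative of `u^{1-θ}/(1-θ)` and integrates to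
zero, while `u'/u = 1/z + k'/k` with `k'/k` holomorphic on the disc, so the second term
contributes `2πi c`.
-/

open Complex Metric Set
open scoped NNReal ENNReal Real

theorem summable_of_tsum_ne_zero {α β : Type*} [AddCommMonoid α] [TopologicalSpace α]
    {f : β → α} (h : ∑' b, f b ≠ 0) : Summable f := by
  by_contra hf
  exact h (tsum_eq_zero_of_not_summable hf)

theorem one_add_mul_zpow_sub_one_mul_zpow_neg_mul {K : Type*} [Field K] (b w d : K) (θ : ℤ)
    (hw : w ≠ 0) : (1 + b * w ^ (θ - 1)) * w ^ (-θ) * d = w ^ (-θ) * d + b * (d / w) := by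
  have : w ^ (θ - 1) * w ^ (-θ) = w⁻¹ := by
    rw [← zpow_add₀ hw, show θ - 1 + -θ = -1 by ring, zpow_neg_one]
  linear_combination b * d * this

theorem hasFPowerSeriesOnBall_ofScalars_of_hasSum {f : ℂ → ℂ} {a : ℕ → ℂ} {ρ : ℝ} (hρ : 0 < ρ)
    (hf : ∀ z : ℂ, ‖z‖ < ρ → HasSum (fun n => a n * z ^ n) (f z)) :
    HasFPowerSeriesOnBall f (FormalMultilinearSeries.ofScalars ℂ a) 0 (ENNReal.ofReal ρ) where
  r_le := ENNReal.le_of_forall_nnreal_lt fun t ht => by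
    have hts : HasSum (fun n => a n * (t : ℂ) ^ n) (f t) :=
      hf t (by simpa [ENNReal.coe_lt_ofReal] using ht)
    refine FormalMultilinearSeries.le_radius_of_tendsto _ (l := 0) ?_
    simpa [FormalMultilinearSeries.ofScalars_norm] using hts.summable.tendsto_atTop_zero.norm
  r_pos := ENNReal.ofReal_pos.2 hρ
  hasSum {y} hy := by
    simpa [FormalMultilinearSeries.ofScalars_apply_eq, mul_comm] using
      hf y (by simpa using edist_lt_ofReal.1 hy)

theorem HasFPowerSeriesOnBall.circleIntegral_sub_zpow_smul_eq_coeff {E : Type*}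
    [NormedAddCommGroup E] [NormedSpace ℂ E] [CompleteSpace E] {f : ℂ → E}
    {p : FormalMultilinearSeries ℂ ℂ E} {c : ℂ} {R : ℝ≥0∞} {r : ℝ≥0}
    (hf : HasFPowerSeriesOnBall f p c R) (hr : 0 < r) (hrR : (r : ℝ≥0∞) < R) (n : ℕ) :
    (∮ z in C(c, r), (z - c) ^ (-(n + 1 : ℤ)) • f z) = (2 * π * I) • p.coeff n := by
  have hd : DifferentiableOn ℂ f (closedBall c r) := hf.differentiableOn.mono fun z hz =>
    lt_of_le_of_lt (by rwa [← closedEBall_coe] at hz) hrR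
  rw [hf.hasFPowerSeriesAt.eq_formalMultilinearSeries
      (hd.hasFPowerSeriesOnBall hr).hasFPowerSeriesAt, FormalMultilinearSeries.coeff, Pi.one_def,
    cauchyPowerSeries_apply, smul_smul, mul_inv_cancel₀ two_pi_I_ne_zero, one_smul]
  congr 1 with z
  rw [smul_smul, zpow_neg, ← Nat.cast_succ, zpow_natCast, pow_succ, mul_inv, one_div, inv_pow]

theorem circleIntegral_zpow_mul_deriv_eq_zero {u : ℂ → ℂ} {c : ℂ} {R : ℝ} (hR : 0 ≤ R) {m : ℤ}
    (hm : m ≠ -1) (hu : ∀ z ∈ sphere c R, DifferentiableAt ℂ u z ∧ u z ≠ 0) :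
    (∮ z in C(c, R), u z ^ m * deriv u z) = 0 := by
  have hm' : ((m + 1 : ℤ) : ℂ) ≠ 0 := Int.cast_ne_zero.2 (by omega)
  refine circleIntegral.integral_eq_zero_of_hasDerivWithinAt hR
    (f := fun z => ((m + 1 : ℤ) : ℂ)⁻¹ * u z ^ (m + 1)) fun z hz => ?_
  have hz := hu z hz
  refine (((hasDerivAt_zpow (m + 1) (u z) (.inl hz.2)).comp z hz.1.hasDerivAt).const_mul
    ((m + 1 : ℤ) : ℂ)⁻¹ |>.congr_deriv ?_).hasDerivWithinAt
  simp only [add_sub_cancel_right]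
  field_simp

theorem circleIntegral_logDeriv_eq_zero {k : ℂ → ℂ} {c : ℂ} {R : ℝ} (hR : 0 ≤ R)
    (hk : AnalyticOnNhd ℂ k (closedBall c R)) (hk0 : ∀ z ∈ closedBall c R, k z ≠ 0) :
    (∮ z in C(c, R), logDeriv k z) = 0 :=
  ((hk.deriv.div hk hk0).differentiableOn.mono closure_ball_subset_closedBall).diffContOnCl
    |>.circleIntegral_eq_zero hR

theorem circleIntegral_logDeriv_eq_two_pi_I {u k : ℂ → ℂ} {c : ℂ} {R : ℝ} (hR : 0 < R)
    (hk : AnalyticOnNhd ℂ k (closedBall c R)) (hk0 : ∀ z ∈ closedBall c R, k z ≠ 0)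
    (hu : ∀ z, u z = (z - c) * k z) :
    (∮ z in C(c, R), logDeriv u z) = 2 * π * I := by
  obtain rfl : u = fun z => (z - c) * k z := funext hu
  have hsplit : EqOn (logDeriv fun z => (z - c) * k z) (fun z => (z - c)⁻¹ + logDeriv k z)
      (sphere c R) := fun z hz => by
    have hzc : z - c ≠ 0 := sub_ne_zero.2 (ne_of_mem_sphere hz hR.ne')
    have hzR := sphere_subset_closedBall hz
    rw [logDeriv_mul z hzc (hk0 z hzR) (by fun_prop) (hk z hzR).differentiableAt]
    simp [logDeriv_apply]
  have hcont : ContinuousOn (logDeriv k) (sphere c R) :=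
    (hk.deriv.div hk hk0).continuousOn.mono sphere_subset_closedBall
  rw [circleIntegral.integral_congr hR.le hsplit, circleIntegral.integral_add
    (circleIntegrable_sub_inv_iff.2 (.inr ?_)) (hcont.circleIntegrable hR.le),
    circleIntegral.integral_sub_center_inv c hR.ne', circleIntegral_logDeriv_eq_zero hR.le hk hk0,
    add_zero]
  simpa using (abs_pos.2 hR.ne').ne

theorem circleIntegral_zpow_mul_deriv_add_mul_logDeriv {u : ℂ → ℂ} {c : ℂ} {R : ℝ} (hR : 0 ≤ R)
    {m : ℤ} (hm : m ≠ -1) (b : ℂ) (hu : AnalyticOnNhd ℂ u (sphere c R))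
    (hu0 : ∀ z ∈ sphere c R, u z ≠ 0) :
    (∮ z in C(c, R), (u z ^ m * deriv u z + b * logDeriv u z)) =
      b * ∮ z in C(c, R), logDeriv u z := by
  have hexact : ContinuousOn (fun z => u z ^ m * deriv u z) (sphere c R) :=
    (hu.continuousOn.zpow₀ m fun z hz => .inl (hu0 z hz)).mul hu.deriv.continuousOn
  have hlog : ContinuousOn (fun z => b * logDeriv u z) (sphere c R) :=
    continuousOn_const.mul (hu.deriv.continuousOn.div hu.continuousOn hu0)
  rw [circleIntegral.integral_add (hexact.circleIntegrable hR) (hlog.circleIntegrable hR),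
    circleIntegral_zpow_mul_deriv_eq_zero hR hm fun z hz => ⟨(hu z hz).differentiableAt, hu0 z hz⟩,
    circleIntegral.integral_const_mul, zero_add]

theorem eq_coeff_of_forall_mem_sphere {θ : ℤ} (hθ : 2 ≤ θ) {c : ℂ} {f u k : ℂ → ℂ}
    {a : ℕ → ℂ} {ρ : ℝ} {r : ℝ≥0} (hr0 : 0 < (r : ℝ)) (hrρ : r < ρ)
    (hf : ∀ z : ℂ, ‖z‖ < ρ → HasSum (fun n => a n * z ^ n) (f z))
    (hk : AnalyticOnNhd ℂ k (closedBall 0 r)) (hk0 : ∀ z ∈ closedBall (0 : ℂ) r, k z ≠ 0)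
    (hu : ∀ z, u z = z * k z)
    (heq : ∀ z ∈ sphere (0 : ℂ) r,
      f z * z ^ (-θ) = (1 + c * u z ^ (θ - 1)) * u z ^ (-θ) * deriv u z) :
    c = a (θ - 1).toNat := by
  have hu_an : AnalyticOnNhd ℂ u (sphere 0 r) := by
    rw [funext hu]
    exact fun z hz => analyticAt_id.mul (hk z (sphere_subset_closedBall hz))
  have hu_ne : ∀ z ∈ sphere (0 : ℂ) r, u z ≠ 0 := fun z hz => by
    rw [hu]
    exact mul_ne_zero (ne_of_mem_sphere hz hr0.ne') (hk0 z (sphere_subset_closedBall hz))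
  set n := (θ - 1).toNat
  have hn : -((n : ℤ) + 1) = -θ := by omega
  have hsplit : EqOn (fun z => (z - 0) ^ (-((n : ℤ) + 1)) • f z)
      (fun z => u z ^ (-θ) * deriv u z + c * logDeriv u z) (sphere 0 r) := fun z hz => by
    simp only [sub_zero, hn, smul_eq_mul]
    rw [mul_comm, heq z hz, logDeriv_apply,
      one_add_mul_zpow_sub_one_mul_zpow_neg_mul _ _ _ _ (hu_ne z hz)]
  have hcoeff := (hasFPowerSeriesOnBall_ofScalars_of_hasSum (hr0.trans hrρ) hf)
    |>.circleIntegral_sub_zpow_smul_eq_coeff (NNReal.coe_pos.1 hr0) (by simpa using hrρ) n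
  rw [FormalMultilinearSeries.coeff_ofScalars, smul_eq_mul] at hcoeff
  refine (mul_left_cancel₀ two_pi_I_ne_zero ?_).symm
  calc 2 * π * I * a n = ∮ z in C(0, r), (z - 0) ^ (-((n : ℤ) + 1)) • f z := hcoeff.symm
    _ = ∮ z in C(0, r), (u z ^ (-θ) * deriv u z + c * logDeriv u z) :=
      circleIntegral.integral_congr r.2 hsplit
    _ = c * ∮ z in C(0, r), logDeriv u z :=
      circleIntegral_zpow_mul_deriv_add_mul_logDeriv r.2 (by omega) c hu_an hu_ne
    _ = 2 * π * I * c := by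
      rw [circleIntegral_logDeriv_eq_two_pi_I hr0 hk hk0 fun z => by rw [hu, sub_zero], mul_comm]

theorem residue_forces_translation_general (θ : ℤ) (hθ : 2 ≤ θ) (c : ℂ)
    (F : ℂ → ℂ)
    (a : ℕ → ℂ) (ρ : ℝ) (hρ : 0 < ρ)
    (ha : ∀ z : ℂ, ‖z‖ < ρ → Complex.exp (-F z) = ∑' n : ℕ, a n * z ^ n)
    (u k : ℂ → ℂ) (hk : AnalyticAt ℂ k 0) (hk0 : k 0 ≠ 0)
    (hu : ∀ z : ℂ, u z = z * k z)
    (heq : ∀ᶠ z in nhdsWithin (0 : ℂ) {0}ᶜ,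
      Complex.exp (-F z) * z ^ (-θ)
        = (1 + c * u z ^ (θ - 1)) * u z ^ (-θ) * deriv u z) :
    c = a (θ - 1).toNat := by
  obtain ⟨ε, hε, hloc⟩ := nhds_basis_closedBall.eventually_iff.1 <|
    (hk.eventually_analyticAt.and (hk.continuousAt.eventually_ne hk0)).and
      (eventually_nhdsWithin_iff.1 heq)
  obtain ⟨r, hr0, hr⟩ := exists_between (lt_min hε hρ)
  lift r to ℝ≥0 using hr0.le
  have hball : closedBall (0 : ℂ) r ⊆ closedBall 0 ε :=
    closedBall_subset_closedBall (hr.le.trans (min_le_left _ _))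
  refine eq_coeff_of_forall_mem_sphere hθ hr0 (hr.trans_le (min_le_right _ _))
    (fun z hz => ?_) (fun z hz => (hloc (hball hz)).1.1) (fun z hz => (hloc (hball hz)).1.2) hu
    fun z hz => (hloc (hball (sphere_subset_closedBall hz))).2 (ne_of_mem_sphere hz hr0.ne')
  exact ha z hz ▸ (summable_of_tsum_ne_zero (ha z hz ▸ exp_ne_zero _)).hasSum

theorem residue_forces_translation (θ : ℤ) (hθ : 2 ≤ θ) (c : ℂ)
    (F : ℂ → ℂ) (hF : AnalyticAt ℂ F 0)
    (a : ℕ → ℂ) (ρ : ℝ) (hρ : 0 < ρ)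
    (ha : ∀ z : ℂ, ‖z‖ < ρ → Complex.exp (-F z) = ∑' n : ℕ, a n * z ^ n)
    (u k : ℂ → ℂ) (hk : AnalyticAt ℂ k 0) (hk0 : k 0 ≠ 0)
    (hu : ∀ z : ℂ, u z = z * k z)
    (heq : ∀ᶠ z in nhdsWithin (0 : ℂ) {0}ᶜ,
      Complex.exp (-F z) * z ^ (-θ)
        = (1 + c * u z ^ (θ - 1)) * u z ^ (-θ) * deriv u z) :
    c = a (θ - 1).toNat :=
  residue_forces_translation_general θ hθ c F a ρ hρ ha u k hk hk0 hu heq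
end
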